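/- For every m ≥ 3, the cycle C_{2m} is a subgraph of the prism P_m □ K_2, and sdim(C_{2m})/sdim(P_m □ K_2) = m/2; in particular the ratio sdim(H)/sdim(G) over pairs H ⊆ G of connected graphs is unbounded. -/

import Mathlib

/-!
Distances in `C₂ₘ` and in `Pₘ □ K₂` are computed explicitly, by recognising a function that
vanishes only at the target, changes by at most one along edges and decreases along some edge as
the distance to the target. Antipodal vertices of `C₂ₘ` are diametral, hence every strong
resolving set meets each of the `m` antipodal pairs; conversely `{0, …, m - 1}` resolves, any
other pair being resolved by an antipode. In `Pₘ □ K₂` the two ends of one copy of `Pₘ` resolve,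
while a single vertex never does, being equidistant from two of its neighbours.
-/

open SimpleGraph

variable {V : Type*} {W : Type*}

/-- `x` lies on some `y`–`z` geodesic in `G`. -/
def LiesOnGeodesic (G : SimpleGraph V) (x y z : V) : Prop :=
  G.dist y x + G.dist x z = G.dist y z

/-- A strong resolving set of `G`. -/
def IsStrongResolvingSet (G : SimpleGraph V) (S : Set V) : Prop :=
  ∀ x y : V, x ≠ y → ∃ z ∈ S,
    LiesOnGeodesic G x y z ∨ LiesOnGeodesic G y x z

/-- The strong metric dimension of a finite graph. -/
noncomputable def sdim (G : SimpleGraph V) [Fintype V] : ℕ :=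
  sInf {n : ℕ | ∃ S : Finset V, S.card = n ∧ IsStrongResolvingSet G ↑S}

/-- `u` is maximally distant from `v` in `G`. -/
def MaxDistFrom (G : SimpleGraph V) (u v : V) : Prop :=
  ∀ w : V, G.Adj u w → G.dist w v ≤ G.dist u v

/-- `u` and `v` are mutually maximally distant in `G`. -/
def MutMaxDist (G : SimpleGraph V) (u v : V) : Prop :=
  MaxDistFrom G u v ∧ MaxDistFrom G v u

/-- The strong resolving graph of `G` (on the full vertex set; vertices not in
any MMD pair are isolated). -/
def srGraph (G : SimpleGraph V) : SimpleGraph V where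
  Adj u v := u ≠ v ∧ MutMaxDist G u v
  symm := by
    constructor
    rintro u v ⟨h, h1, h2⟩
    exact ⟨h.symm, h2, h1⟩
  loopless := by constructor; rintro v ⟨h, -⟩; exact h rfl

/-- The cycle graph on `n` vertices (`n ≥ 3`), as a graph on `Fin n`. -/
def cycGraph (n : ℕ) : SimpleGraph (Fin n) where
  Adj i j := i ≠ j ∧ ((i.val + 1) % n = j.val ∨ (j.val + 1) % n = i.val)
  symm := by
    constructor
    rintro i j ⟨h, h'⟩
    exact ⟨h.symm, h'.symm⟩
  loopless := by constructor; rintro i ⟨h, -⟩; exact h rfl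

section Aux


namespace SimpleGraph

variable {G : SimpleGraph V}

theorem le_length_of_forall_adj {y : V} (f : V → ℕ) (hf_zero : f y = 0)
    (hf_adj : ∀ x w, G.Adj x w → f x ≤ f w + 1) {x : V} (p : G.Walk x y) : f x ≤ p.length := by
  induction p with
  | nil => simpa using hf_zero
  | cons h p ih =>
    have := hf_adj _ _ h
    have := ih hf_zero
    rw [Walk.length_cons]
    omega

theorem dist_eq_of_forall_adj {y : V} (f : V → ℕ) (hf_zero : ∀ x, f x = 0 ↔ x = y)
    (hf_adj : ∀ x w, G.Adj x w → f x ≤ f w + 1)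
    (hf_desc : ∀ x, x ≠ y → ∃ w, G.Adj x w ∧ f w < f x) (x : V) :
    G.dist x y = f x := by
  have exists_walk_le : ∀ n x, f x = n → ∃ p : G.Walk x y, p.length ≤ n := by
    intro n
    induction n using Nat.strong_induction_on with
    | _ n ih =>
      intro x hx
      by_cases hxy : x = y
      · subst hxy
        exact ⟨.nil, by simp⟩
      obtain ⟨w, hxw, hw⟩ := hf_desc x hxy
      obtain ⟨p, hp⟩ := ih (f w) (hx ▸ hw) w rfl
      exact ⟨.cons hxw p, by rw [Walk.length_cons]; omega⟩
  obtain ⟨p, hp⟩ := exists_walk_le _ x rfl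
  obtain ⟨q, hq⟩ := p.reachable.exists_walk_length_eq_dist
  have := le_length_of_forall_adj f ((hf_zero y).2 rfl) hf_adj q
  have := dist_le p
  omega

theorem dist_boxProd {H : SimpleGraph W} (hG : G.Preconnected) (hH : H.Preconnected)
    (x y : V × W) : (G □ H).dist x y = G.dist x.1 y.1 + H.dist x.2 y.2 := by
  simp only [SimpleGraph.dist, edist_boxProd]
  exact ENat.toNat_add (edist_ne_top_iff_reachable.2 (hG _ _))
    (edist_ne_top_iff_reachable.2 (hH _ _))

theorem dist_pathGraph {n : ℕ} (i j : Fin n) : (pathGraph n).dist i j = (i : ℕ).dist j := by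
  refine dist_eq_of_forall_adj (fun x : Fin n => (x : ℕ).dist j) (fun x => ?_)
    (fun x w hxw => ?_) (fun x hx => ?_) i
  · simp only [Nat.dist, Fin.ext_iff]
    omega
  · rw [pathGraph_adj] at hxw
    simp only [Nat.dist]
    omega
  · have hx' : x.val ≠ j.val := Fin.val_ne_of_ne hx
    have hj := j.isLt
    refine ⟨⟨if x.val < j.val then x.val + 1 else x.val - 1, by split_ifs <;> omega⟩, ?_, ?_⟩
    · rw [pathGraph_adj]
      dsimp only
      split_ifs <;> omega
    · simp only [Nat.dist]
      split_ifs <;> omega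

theorem dist_top_fin_two (s t : Fin 2) : (⊤ : SimpleGraph (Fin 2)).dist s t = (s : ℕ).dist t := by
  by_cases hst : s = t
  · simp [hst]
  · rw [dist_eq_one_iff_adj.2 ((top_adj s t).2 hst)]
    have := Fin.val_ne_of_ne hst
    simp only [Nat.dist]
    omega

end SimpleGraph

section StrongResolving

variable {G : SimpleGraph V}

theorem liesOnGeodesic_self (x y : V) : LiesOnGeodesic G x y x := by
  simp [LiesOnGeodesic]

theorem not_liesOnGeodesic_of_dist_eq (hG : G.Preconnected) {x y z : V} (hxy : x ≠ y)
    (h : G.dist x z = G.dist y z) : ¬LiesOnGeodesic G x y z := by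
  intro hgeo
  have : G.dist y x = 0 := by unfold LiesOnGeodesic at hgeo; omega
  exact hxy ((hG y x).dist_eq_zero_iff.1 this).symm

theorem IsStrongResolvingSet.mem_or_mem_of_forall_dist_le {S : Set V}
    (hS : IsStrongResolvingSet G S) (hG : G.Preconnected) {x y : V} (hxy : x ≠ y)
    (hx : ∀ z, G.dist x z ≤ G.dist x y) (hy : ∀ z, G.dist y z ≤ G.dist x y) : x ∈ S ∨ y ∈ S := by
  obtain ⟨z, hzS, hgeo | hgeo⟩ := hS x y hxy <;> unfold LiesOnGeodesic at hgeo
  · have := hy z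
    have : G.dist x z = 0 := by rw [dist_comm (u := y)] at hgeo; omega
    exact .inl (((hG x z).dist_eq_zero_iff.1 this) ▸ hzS)
  · have := hx z
    have : G.dist y z = 0 := by omega
    exact .inr (((hG y z).dist_eq_zero_iff.1 this) ▸ hzS)

theorem IsStrongResolvingSet.two_le_card [Nonempty V] (hG : G.Preconnected)
    (hdeg : ∀ z, ∃ x y, x ≠ y ∧ G.Adj z x ∧ G.Adj z y) {S : Finset V}
    (hS : IsStrongResolvingSet G S) : 2 ≤ S.card := by
  by_contra! hcard
  obtain ⟨x₀, y₀, hxy₀, -, -⟩ := hdeg (Classical.arbitrary V)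
  obtain ⟨z, hz, -⟩ := hS x₀ y₀ hxy₀
  obtain ⟨x, y, hxy, hzx, hzy⟩ := hdeg z
  obtain ⟨z', hz', hgeo⟩ := hS x y hxy
  obtain rfl : z' = z := Finset.card_le_one.1 (by omega) _ hz' _ hz
  have hdist : G.dist x z' = G.dist y z' := by
    rw [dist_comm, dist_eq_one_iff_adj.2 hzx, dist_comm, dist_eq_one_iff_adj.2 hzy]
  rcases hgeo with hgeo | hgeo
  · exact not_liesOnGeodesic_of_dist_eq hG hxy hdist hgeo
  · exact not_liesOnGeodesic_of_dist_eq hG hxy.symm hdist.symm hgeo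

variable [Fintype V]

theorem sdim_le_card {S : Finset V} (hS : IsStrongResolvingSet G S) : sdim G ≤ S.card :=
  Nat.sInf_le ⟨S, rfl, hS⟩

theorem le_sdim_iff {k : ℕ} :
    k ≤ sdim G ↔ ∀ S : Finset V, IsStrongResolvingSet G S → k ≤ S.card := by
  refine ⟨fun h S hS => h.trans (sdim_le_card hS), fun h => ?_⟩
  have huniv : IsStrongResolvingSet G (Finset.univ : Finset V) :=
    fun x y _ => ⟨x, Finset.mem_coe.2 (Finset.mem_univ x), .inl (liesOnGeodesic_self x y)⟩
  obtain ⟨S, hcard, hS⟩ := Nat.sInf_mem (s := {n | ∃ S : Finset V, S.card = n ∧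
    IsStrongResolvingSet G S}) ⟨_, _, rfl, huniv⟩
  rw [sdim, ← hcard]
  exact h S hS

end StrongResolving

section Cycle

def cycDist (n i j : ℕ) : ℕ := min (i.dist j) (n - i.dist j)

theorem cycGraph_adj_iff {n : ℕ} {i j : Fin n} :
    (cycGraph n).Adj i j ↔ i ≠ j ∧ (i.val + 1 = j.val ∨ j.val + 1 = i.val ∨
      i.val + 1 = n ∧ j.val = 0 ∨ j.val + 1 = n ∧ i.val = 0) := by
  have succ_mod : ∀ a b : Fin n,
      (a.val + 1) % n = b.val ↔ a.val + 1 = b.val ∨ a.val + 1 = n ∧ b.val = 0 := by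
    intro a b
    rcases Nat.lt_or_ge (a.val + 1) n with ha | ha
    · rw [Nat.mod_eq_of_lt ha]; omega
    · rw [show a.val + 1 = n by omega, Nat.mod_self]; omega
  show i ≠ j ∧ ((i.val + 1) % n = j.val ∨ (j.val + 1) % n = i.val) ↔ _
  rw [succ_mod, succ_mod]
  tauto

theorem dist_cycGraph {n : ℕ} (i j : Fin n) : (cycGraph n).dist i j = cycDist n i j := by
  have hj := j.isLt
  refine dist_eq_of_forall_adj (fun x : Fin n => cycDist n x j) (fun x => ?_) (fun x w hxw => ?_)
    (fun x hx => ?_) i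
  · simp only [cycDist, Nat.dist, Fin.ext_iff]
    omega
  · rw [cycGraph_adj_iff] at hxw
    simp only [cycDist, Nat.dist]
    omega
  · have hx' : x.val ≠ j.val := Fin.val_ne_of_ne hx
    have hxn := x.isLt
    -- step to whichever neighbour of `x` is closer to `j`
    obtain ⟨v, hv, hne, hadj, hlt⟩ : ∃ v, v < n ∧ x.val ≠ v ∧ (x.val + 1 = v ∨ v + 1 = x.val ∨
        x.val + 1 = n ∧ v = 0 ∨ v + 1 = n ∧ x.val = 0) ∧ cycDist n v j < cycDist n x j := by
      by_cases hfwd : cycDist n (if x.val + 1 = n then 0 else x.val + 1) j < cycDist n x j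
      · refine ⟨_, ?_, ?_, ?_, hfwd⟩ <;> split_ifs <;> omega
      · refine ⟨if x.val = 0 then n - 1 else x.val - 1, ?_, ?_, ?_, ?_⟩ <;>
          simp only [cycDist, Nat.dist] at hfwd ⊢ <;> split_ifs at hfwd ⊢ <;> omega
    exact ⟨⟨v, hv⟩, cycGraph_adj_iff.2 ⟨Fin.ne_of_val_ne hne, hadj⟩, hlt⟩

theorem cycGraph_preconnected (n : ℕ) : (cycGraph n).Preconnected := by
  intro x y
  by_cases hxy : x = y
  · exact hxy ▸ .refl _
  refine Reachable.of_dist_ne_zero ?_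
  rw [dist_cycGraph]
  simp only [cycDist, Nat.dist, ne_eq, Fin.ext_iff] at hxy ⊢
  omega

theorem isStrongResolvingSet_cycGraph (m : ℕ) :
    IsStrongResolvingSet (cycGraph (2 * m)) {x | x.val < m} := by
  intro x y hxy
  by_cases hx : x.val < m
  · exact ⟨x, hx, .inl (liesOnGeodesic_self x y)⟩
  by_cases hy : y.val < m
  · exact ⟨y, hy, .inr (liesOnGeodesic_self y x)⟩
  refine ⟨⟨x.val - m, by omega⟩, show x.val - m < m by omega, .inr ?_⟩
  simp only [LiesOnGeodesic, dist_cycGraph, cycDist, Nat.dist]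
  omega

theorem IsStrongResolvingSet.le_card_of_cycGraph {m : ℕ} {S : Finset (Fin (2 * m))}
    (hS : IsStrongResolvingSet (cycGraph (2 * m)) S) : m ≤ S.card := by
  have hcover : ∀ c (hc : c < m),
      (⟨c, by omega⟩ : Fin (2 * m)) ∈ S ∨ (⟨c + m, by omega⟩ : Fin (2 * m)) ∈ S := by
    intro c hc
    refine hS.mem_or_mem_of_forall_dist_le (cycGraph_preconnected _) ?_ (fun z => ?_) (fun z => ?_)
    · simp only [ne_eq, Fin.ext_iff]
      omega
    all_goals
      have := z.isLt
      simp only [dist_cycGraph, cycDist, Nat.dist]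
      omega
  calc m = (Finset.range m).card := (Finset.card_range m).symm
    _ ≤ (S.image (fun x => x.val % m)).card := by
      refine Finset.card_le_card fun c hc => ?_
      rw [Finset.mem_range] at hc
      rw [Finset.mem_image]
      rcases hcover c hc with h | h
      · exact ⟨_, h, Nat.mod_eq_of_lt hc⟩
      · exact ⟨_, h, by simp [Nat.mod_eq_of_lt hc]⟩
    _ ≤ S.card := Finset.card_image_le

theorem sdim_cycGraph_two_mul (m : ℕ) : sdim (cycGraph (2 * m)) = m := by
  refine le_antisymm ?_ (le_sdim_iff.2 fun S hS => hS.le_card_of_cycGraph)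
  calc sdim (cycGraph (2 * m)) ≤ (Finset.univ.filter fun x : Fin (2 * m) => x.val < m).card :=
        sdim_le_card (by simpa using isStrongResolvingSet_cycGraph m)
    _ = m := by rw [Fin.card_filter_val_lt]; omega

end Cycle

section Prism

variable {m : ℕ}

theorem dist_prism (x y : Fin m × Fin 2) :
    (pathGraph m □ (⊤ : SimpleGraph (Fin 2))).dist x y =
      (x.1 : ℕ).dist y.1 + (x.2 : ℕ).dist y.2 := by
  rw [dist_boxProd (pathGraph_preconnected m) preconnected_top, dist_pathGraph, dist_top_fin_two]

/-- Of two vertices, the one in copy `0` of `Pₘ` (either one, if they share a copy) lies on a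
geodesic from the other one to the end of copy `0` beyond it. -/
theorem isStrongResolvingSet_prism (hm : 0 < m) :
    IsStrongResolvingSet (pathGraph m □ (⊤ : SimpleGraph (Fin 2)))
      ↑({(⟨0, hm⟩, 0), (⟨m - 1, by omega⟩, 0)} : Finset (Fin m × Fin 2)) := by
  rintro ⟨i, s⟩ ⟨j, t⟩ -
  have := i.isLt; have := j.isLt; have := s.isLt; have := t.isLt
  simp only [Finset.coe_insert, Finset.coe_singleton, Set.mem_insert_iff, Set.mem_singleton_iff,
    exists_eq_or_imp, exists_eq_left, LiesOnGeodesic, dist_prism, Nat.dist, Fin.val_zero]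
  omega

theorem prism_exists_two_adj (hm : 2 ≤ m) (z : Fin m × Fin 2) :
    ∃ x y, x ≠ y ∧ (pathGraph m □ (⊤ : SimpleGraph (Fin 2))).Adj z x ∧
      (pathGraph m □ (⊤ : SimpleGraph (Fin 2))).Adj z y := by
  obtain ⟨a, u⟩ := z
  have := a.isLt; have := u.isLt
  obtain ⟨b, hab⟩ : ∃ b : Fin m, a.val + 1 = b.val ∨ b.val + 1 = a.val :=
    if h : a.val + 1 < m then ⟨⟨a.val + 1, h⟩, .inl rfl⟩
    else ⟨⟨a.val - 1, by omega⟩, .inr (Nat.sub_add_cancel (by omega))⟩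
  refine ⟨(a, ⟨1 - u, by omega⟩), (b, u), ?_, ?_, ?_⟩ <;>
  simp only [ne_eq, Prod.ext_iff, Fin.ext_iff, boxProd_adj, pathGraph_adj, top_adj, and_true,
    not_true_eq_false, false_and, or_false] <;>
  omega

theorem sdim_prism (hm : 2 ≤ m) : sdim (pathGraph m □ (⊤ : SimpleGraph (Fin 2))) = 2 := by
  have : Nonempty (Fin m) := ⟨⟨0, by omega⟩⟩
  refine le_antisymm ?_ (le_sdim_iff.2 fun S hS =>
    hS.two_le_card ((pathGraph_preconnected m).boxProd preconnected_top) (prism_exists_two_adj hm))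
  refine (sdim_le_card (isStrongResolvingSet_prism (by omega))).trans_eq (Finset.card_pair ?_)
  simp only [ne_eq, Prod.ext_iff, Fin.ext_iff]
  omega

end Prism

section Embedding

/-- `C₂ₘ` runs forward along the first copy of `Pₘ` and back along the second. -/
def cycToPrism (m : ℕ) (i : Fin (2 * m)) : Fin m × Fin 2 :=
  if h : i.val < m then (⟨i, h⟩, 0) else (⟨2 * m - 1 - i, by omega⟩, 1)

theorem cycToPrism_injective (m : ℕ) : Function.Injective (cycToPrism m) := by
  intro i j hij
  have := i.isLt; have := j.isLt
  unfold cycToPrism at hij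
  split_ifs at hij <;> simp only [Prod.ext_iff, Fin.ext_iff, Fin.isValue] at hij <;> omega

def cycGraphHomPrism (m : ℕ) : cycGraph (2 * m) →g pathGraph m □ (⊤ : SimpleGraph (Fin 2)) where
  toFun := cycToPrism m
  map_rel' {i j} hij := by
    rw [cycGraph_adj_iff] at hij
    have := i.isLt; have := j.isLt
    unfold cycToPrism
    split_ifs <;> simp [boxProd_adj, pathGraph_adj, Fin.ext_iff] <;> omega

end Embedding

theorem cycle_subgraph_prism_sdim_ratio (m : ℕ) (hm : 3 ≤ m) :
    (∃ f : cycGraph (2 * m) →g (pathGraph m □ (⊤ : SimpleGraph (Fin 2))),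
        Function.Injective f) ∧
    sdim (cycGraph (2 * m)) = m ∧
    sdim (pathGraph m □ (⊤ : SimpleGraph (Fin 2))) = 2 :=
  ⟨⟨cycGraphHomPrism m, cycToPrism_injective m⟩, sdim_cycGraph_two_mul m, sdim_prism (by omega)⟩
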